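/- Let G = (V, E, s, r) be a countable directed graph and let (Q, T) be a TCK family for G on a nonzero complex Hilbert space H which is irreducible: the only closed subspaces of H invariant under every Q_v, T_e and their adjoints are {0} and H. Suppose v ∈ V satisfies r⁻¹(v) ≠ ∅ and there exists a nonzero vector ζ ∈ H with Q_v ζ = ζ and T_e* ζ = 0 for every e ∈ r⁻¹(v) (i.e., v is a singular vertex for (Q, T)). Then (Q, T) is unitarily equivalent to the model TCK family (P^v, S^v) on H_{G,v}. -/

import Mathlib

noncomputable section

open scoped ENNReal InnerProductSpace ComplexOrder
open ContinuousLinearMap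

attribute [local instance] Classical.propDecidable

namespace GraphPaper

/-! ### Positivity of operators (without completeness assumptions) -/

/-- A bounded operator on a complex inner product space is positive if all the
inner products `⟪T x, x⟫` are nonnegative (this forces them to be real). -/
def IsPosOp {W : Type*} [NormedAddCommGroup W] [InnerProductSpace ℂ W]
    (T : W →L[ℂ] W) : Prop :=
  ∀ x : W, 0 ≤ (inner ℂ (T x) x : ℂ)

/-! ### Toeplitz-Cuntz-Krieger families -/

variable {V E : Type*}

variable {H : Type*} [NormedAddCommGroup H] [InnerProductSpace ℂ H] [CompleteSpace H]

/-- The Toeplitz-Cuntz-Krieger relations for a family of projections `P` indexed by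
vertices and partial isometries `S` indexed by edges. -/
def IsTCK (s r : E → V) (P : V → H →L[ℂ] H) (S : E → H →L[ℂ] H) : Prop :=
  (∀ v, adjoint (P v) = P v) ∧
  (∀ v, P v ∘L P v = P v) ∧
  (∀ v w, v ≠ w → P v ∘L P w = 0) ∧
  (∀ e, adjoint (S e) ∘L S e = P (s e)) ∧
  (∀ (v : V) (F : Finset E), (∀ e ∈ F, r e = v) →
    IsPosOp (P v - ∑ e ∈ F, S e ∘L adjoint (S e)))

/-- A TCK family is a full Cuntz-Krieger family if for every vertex `v` receiving at
least one edge, the (unconditionally convergent) sum `∑_{r(e) = v} S_e S_e* x` is `P_v x`. -/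
def IsFullCK (s r : E → V) (P : V → H →L[ℂ] H) (S : E → H →L[ℂ] H) : Prop :=
  ∀ v : V, (∃ e, r e = v) → ∀ x : H,
    HasSum (fun e : {e : E // r e = v} => S e.1 (adjoint (S e.1) x)) (P v x)

/-- A TCK family is a Cuntz-Krieger family if `∑_{r(e) = v} S_e S_e* = P_v` for every
vertex `v` receiving finitely many and at least one edge. -/
def IsCK (s r : E → V) (P : V → H →L[ℂ] H) (S : E → H →L[ℂ] H) : Prop :=
  IsTCK s r P S ∧
  ∀ (v : V) (hfin : {e : E | r e = v}.Finite), hfin.toFinset.Nonempty →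
    ∑ e ∈ hfin.toFinset, S e ∘L adjoint (S e) = P v

/-- The generators of a TCK family, indexed by vertices and edges. -/
def gen (P : V → H →L[ℂ] H) (S : E → H →L[ℂ] H) : V ⊕ E → H →L[ℂ] H :=
  Sum.elim P S

variable {K : Type*} [NormedAddCommGroup K] [InnerProductSpace ℂ K] [CompleteSpace K]

/-- `(Q, T)` on `K` dilates `(P, S)` on `H` via the isometry `W : H → K`:
compressions of arbitrary nonempty words in the generators agree. -/
def Dilates (P : V → H →L[ℂ] H) (S : E → H →L[ℂ] H)
    (Q : V → K →L[ℂ] K) (T : E → K →L[ℂ] K) (W : H →L[ℂ] K) : Prop :=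
  (∀ x : H, ‖W x‖ = ‖x‖) ∧
  ∀ l : List (V ⊕ E), l ≠ [] →
    adjoint W ∘L (l.map (gen Q T)).prod ∘L W = (l.map (gen P S)).prod

/-! ### Finite paths -/

/-- A finite path `λ = e_n ⋯ e_1` in the directed graph determined by the source and
range maps `s r : E → V`, together with a base vertex `src` which is the source of the
path.  The edges are listed as `[e_n, …, e_1]`, with the consecutive compatibility
`s (e_{i+1}) = r (e_i)`, and (when the path is nonempty) `s (e_1) = src`.
A path with no edges is the length-zero path at the vertex `src`. -/
structure GPath (s r : E → V) : Type _ where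
  src : V
  edges : List E
  chain : edges.Chain' fun e f => s e = r f
  src_eq : ∀ e ∈ edges.getLast?, s e = src

variable {s r : E → V}

/-- The range of a finite path. -/
def GPath.rng (p : GPath s r) : V := ((p.edges.head?).map r).getD p.src

theorem GPath.ext' {p q : GPath s r} (h1 : p.src = q.src) (h2 : p.edges = q.edges) :
    p = q := by
  cases p; cases q; simp_all

/-- The length-zero path at a vertex. -/
def GPath.nil (s r : E → V) (v : V) : GPath s r where
  src := v
  edges := []
  chain := List.IsChain.nil
  src_eq := by simp

/-- The tail of a path (removing the first, i.e. last-applied, edge). -/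
def GPath.tail (p : GPath s r) : GPath s r where
  src := p.src
  edges := p.edges.tail
  chain := p.chain.tail
  src_eq := by
    intro f hf
    apply p.src_eq
    rcases hp : p.edges with - | ⟨a, t⟩
    · rw [hp] at hf; simp at hf
    · rw [hp] at hf
      rcases t with - | ⟨b, t'⟩
      · simp at hf
      · simpa [List.getLast?_cons_cons] using hf

/-- The operator `T_λ = T_{e_n} ⋯ T_{e_1}` associated to a finite path `λ`;
for the length-zero path at `v` it is `P_v`. -/
def pathOp (P : V → H →L[ℂ] H) (S : E → H →L[ℂ] H) (p : GPath s r) : H →L[ℂ] H :=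
  if p.edges.isEmpty then P p.src else (p.edges.map S).prod

/-- Paths with source `v`. -/
abbrev SPath (s r : E → V) (v : V) : Type _ := {p : GPath s r // p.src = v}

/-! ### The model space and the model TCK family -/

/-- The model Hilbert space `H_{G,v} = ℓ²` of the set of paths with source `v`. -/
abbrev HGv (s r : E → V) (v : V) : Type _ := lp (fun _ : SPath s r v => ℂ) 2

/-- The basis vector `ξ_λ` of the model space. -/
def xi {v : V} (p : SPath s r v) : HGv s r v := lp.single 2 p 1

/-- Pulling back a function `x : ι → ℂ` along a partially defined map `f`. -/
def pullFun {ι κ : Type*} (f : κ → Option ι) (x : ι → ℂ) (k : κ) : ℂ :=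
  ((f k).map x).getD 0

theorem pullFun_core {ι κ : Type*} (f : κ → Option ι)
    (hf : ∀ ⦃k k' : κ⦄ ⦃i : ι⦄, f k = some i → f k' = some i → k = k')
    (x : lp (fun _ : ι => ℂ) 2) :
    Memℓp (pullFun f ⇑x) 2 ∧
      ∑' k : κ, ‖pullFun f ⇑x k‖ ^ (2 : ℝ) ≤ ∑' i : ι, ‖x i‖ ^ (2 : ℝ) := by
  classical
  have hp : 0 < (2 : ℝ≥0∞).toReal := by norm_num
  have hx : Summable fun i : ι => ‖x i‖ ^ (2 : ℝ) := by
    have := lp.memℓp x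
    rw [memℓp_gen_iff hp] at this
    simpa using this
  set σ : Set κ := {k : κ | (f k).isSome} with hσ
  have hmem : ∀ k : σ, ∃ i, f (k : κ) = some i := fun k => Option.isSome_iff_exists.mp k.2
  set h : σ → ι := fun k => (f (k : κ)).get k.2 with hh
  have hfk : ∀ k : σ, f (k : κ) = some (h k) := fun k => (Option.some_get k.2).symm
  have hinj : Function.Injective h := by
    intro a b hab
    have ha := hfk a
    have hb := hfk b
    rw [hab] at ha
    exact Subtype.ext (hf ha hb)
  have hval : ∀ k : σ, pullFun f ⇑x (k : κ) = x (h k) := by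
    intro k
    simp [pullFun, hfk k]
  set g : κ → ℝ := fun k => ‖pullFun f ⇑x k‖ ^ (2 : ℝ) with hg
  have hsupp : Function.support g ⊆ σ := by
    intro k hk
    by_contra hks
    have : f k = none := by
      rw [hσ] at hks
      simpa [Option.isNone_iff_eq_none, Option.not_isSome_iff_eq_none] using hks
    apply hk
    simp [hg, pullFun, this, Real.zero_rpow (by norm_num : (2:ℝ) ≠ 0)]
  have hcomp : (g ∘ (Subtype.val : σ → κ)) = (fun i => ‖x i‖ ^ (2 : ℝ)) ∘ h := by
    funext k
    simp [hg, Function.comp, hval k]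
  have hsummσ : Summable (g ∘ (Subtype.val : σ → κ)) := by
    rw [hcomp]; exact hx.comp_injective hinj
  have hsumm : Summable g := by
    obtain ⟨a, ha⟩ := hsummσ
    exact ⟨a, (hasSum_subtype_iff_of_support_subset hsupp).mp ha⟩
  constructor
  · apply memℓp_gen
    have : (fun k => ‖pullFun f ⇑x k‖ ^ (2 : ℝ≥0∞).toReal) = g := by
      funext k; simp [hg]
    rw [this]
    exact hsumm
  · have h1 : ∑' k : κ, g k = ∑' k : σ, g k := (tsum_subtype_eq_of_support_subset hsupp).symm
    have h2 : ∑' k : σ, g k ≤ ∑' i : ι, ‖x i‖ ^ (2 : ℝ) := by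
      have := tsum_comp_le_tsum_of_inj hx
        (fun i => Real.rpow_nonneg (norm_nonneg _) _) hinj
      calc ∑' k : σ, g k = ∑' k : σ, ((fun i => ‖x i‖ ^ (2 : ℝ)) ∘ h) k := by
            rw [← hcomp]; rfl
        _ ≤ ∑' i : ι, ‖x i‖ ^ (2 : ℝ) := this
    exact h1.trans_le h2

/-- The bounded operator `lp² ι → lp² κ` induced by a partially defined injection. -/
def pullCLM {ι κ : Type*} (f : κ → Option ι)
    (hf : ∀ ⦃k k' : κ⦄ ⦃i : ι⦄, f k = some i → f k' = some i → k = k') :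
    lp (fun _ : ι => ℂ) 2 →L[ℂ] lp (fun _ : κ => ℂ) 2 :=
  LinearMap.mkContinuous
    { toFun := fun x => ⟨pullFun f ⇑x, (pullFun_core f hf x).1⟩
      map_add' := by
        intro x y
        apply lp.ext
        funext k
        show pullFun f ⇑(x + y) k = pullFun f ⇑x k + pullFun f ⇑y k
        rw [lp.coeFn_add]
        unfold pullFun
        cases f k <;> simp
      map_smul' := by
        intro c x
        apply lp.ext
        funext k
        show pullFun f ⇑(c • x) k = c • pullFun f ⇑x k
        rw [lp.coeFn_smul]
        unfold pullFun
        cases f k <;> simp }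
    1
    (by
      intro x
      have hp : 0 < (2 : ℝ≥0∞).toReal := by norm_num
      rw [one_mul]
      set y : lp (fun _ : κ => ℂ) 2 := ⟨pullFun f ⇑x, (pullFun_core f hf x).1⟩ with hy
      show ‖y‖ ≤ ‖x‖
      have hle := (pullFun_core f hf x).2
      have h1 : ‖y‖ ^ (2:ℝ) = ∑' k : κ, ‖pullFun f ⇑x k‖ ^ (2 : ℝ) := by
        simpa using lp.norm_rpow_eq_tsum hp y
      have h2 : ‖x‖ ^ (2:ℝ) = ∑' i : ι, ‖x i‖ ^ (2 : ℝ) := by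
        simpa using lp.norm_rpow_eq_tsum hp x
      have key : ‖y‖ ^ (2:ℝ) ≤ ‖x‖ ^ (2:ℝ) := by rw [h1, h2]; exact hle
      have k2 : ‖y‖ ^ (2:ℕ) ≤ ‖x‖ ^ (2:ℕ) := by
        rw [← Real.rpow_natCast ‖y‖ 2, ← Real.rpow_natCast ‖x‖ 2]
        exact_mod_cast key
      have hs := Real.sqrt_le_sqrt k2
      rwa [Real.sqrt_sq (norm_nonneg y), Real.sqrt_sq (norm_nonneg x)] at hs)

/-- Decoding map for the model projection at `w`. -/
def decodeP (v w : V) (p : SPath s r v) : Option (SPath s r v) :=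
  if p.1.rng = w then some p else none

/-- Decoding map for the model partial isometry at `e`. -/
def decodeS (v : V) (e : E) (p : SPath s r v) : Option (SPath s r v) :=
  if p.1.edges.head? = some e then some ⟨p.1.tail, p.2⟩ else none

theorem decodeP_inj (v w : V) :
    ∀ ⦃k k' : SPath s r v⦄ ⦃i : SPath s r v⦄,
      decodeP v w k = some i → decodeP v w k' = some i → k = k' := by
  intro k k' i h1 h2
  unfold decodeP at h1 h2
  split_ifs at h1 h2 <;> simp_all

theorem decodeS_inj (v : V) (e : E) :
    ∀ ⦃k k' : SPath s r v⦄ ⦃i : SPath s r v⦄,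
      decodeS v e k = some i → decodeS v e k' = some i → k = k' := by
  intro k k' i h1 h2
  unfold decodeS at h1 h2
  split_ifs at h1 h2 with he1 he2
  have hi1 := Option.some.inj h1
  have hi2 := Option.some.inj h2
  apply Subtype.ext
  apply GPath.ext'
  · rw [k.2, k'.2]
  · obtain ⟨t1, ht1⟩ := List.head?_eq_some_iff.mp he1
    obtain ⟨t2, ht2⟩ := List.head?_eq_some_iff.mp he2
    have e1 : k.1.tail.edges = t1 := by simp [GPath.tail, ht1]
    have e2 : k'.1.tail.edges = t2 := by simp [GPath.tail, ht2]
    have : k.1.tail.edges = k'.1.tail.edges := by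
      rw [show k.1.tail = i.1 from congrArg Subtype.val hi1,
        show k'.1.tail = i.1 from congrArg Subtype.val hi2]
    rw [ht1, ht2]
    rw [e1, e2] at this
    rw [this]

/-- The model projection `P^v_w` on `H_{G,v}`: the orthogonal projection onto the span
of the basis vectors `ξ_λ` with `r(λ) = w`. -/
def modelP (s r : E → V) (v w : V) : HGv s r v →L[ℂ] HGv s r v :=
  pullCLM (decodeP v w) (decodeP_inj v w)

/-- The model partial isometry `S^v_e` on `H_{G,v}`: it maps `ξ_λ` to `ξ_{eλ}`
when `s(e) = r(λ)`, and to `0` otherwise. -/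
def modelS (s r : E → V) (v : V) (e : E) : HGv s r v →L[ℂ] HGv s r v :=
  pullCLM (decodeS v e) (decodeS_inj v e)

/-! ### Reducing subspaces, wandering spaces, maximality -/

universe u

/-- A subspace is reducing for a family of operators if it is invariant under all of them
and all their adjoints. -/
def Reduces (Q : V → H →L[ℂ] H) (T : E → H →L[ℂ] H) (M : Submodule ℂ H) : Prop :=
  (∀ w : V, ∀ x ∈ M, Q w x ∈ M ∧ adjoint (Q w) x ∈ M) ∧
  (∀ e : E, ∀ x ∈ M, T e x ∈ M ∧ adjoint (T e) x ∈ M)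

/-- The wandering space `W_v = {x | Q_v x = x, T_e* x = 0 for all e ∈ r⁻¹(v)}`. -/
def wandering (s r : E → V) (Q : V → H →L[ℂ] H) (T : E → H →L[ℂ] H) (v : V) :
    Submodule ℂ H where
  carrier := {x : H | Q v x = x ∧ ∀ e : E, r e = v → adjoint (T e) x = 0}
  add_mem' := by
    intro a b ha hb
    refine ⟨?_, fun e he => ?_⟩
    · rw [map_add, ha.1, hb.1]
    · rw [map_add, ha.2 e he, hb.2 e he, add_zero]
  zero_mem' := ⟨map_zero _, fun e _ => map_zero _⟩
  smul_mem' := by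
    intro c x hx
    refine ⟨?_, fun e he => ?_⟩
    · rw [map_smul, hx.1]
    · rw [map_smul, hx.2 e he, smul_zero]

/-- The restriction of a TCK family to a reducing subspace `M` is a full Cuntz-Krieger
family (expressed via the action on vectors of `M` in the ambient space). -/
def IsFullCKOn (s r : E → V) (Q : V → H →L[ℂ] H) (T : E → H →L[ℂ] H)
    (M : Submodule ℂ H) : Prop :=
  ∀ v : V, (∃ e, r e = v) → ∀ x ∈ M,
    HasSum (fun e : {e : E // r e = v} => T e.1 (adjoint (T e.1) x)) (Q v x)

/-- A TCK family is maximal if for every TCK family dilating it, the range of the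
dilation isometry is reducing. -/
def IsMaxTCK {V E : Type*} (s r : E → V) {H : Type u} [NormedAddCommGroup H]
    [InnerProductSpace ℂ H] [CompleteSpace H]
    (P : V → H →L[ℂ] H) (S : E → H →L[ℂ] H) : Prop :=
  ∀ (K : Type u) [NormedAddCommGroup K] [InnerProductSpace ℂ K] [CompleteSpace K],
    ∀ (Q : V → K →L[ℂ] K) (T : E → K →L[ℂ] K) (W : H →L[ℂ] K),
      IsTCK s r Q T → Dilates P S Q T W →
        ∀ (g : V ⊕ E) (x : H),
          gen Q T g (W x) ∈ Set.range W ∧ adjoint (gen Q T g) (W x) ∈ Set.range W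

end GraphPaper

/-!
Normalise `ζ`. The vectors `T_λ ζ`, `λ` running over the paths with source `v`, are
orthonormal: the TCK inequality forces `T_e* T_f = δ_{e,f} Q_{s(e)}`, and `T_e* ζ = 0` for
every edge `e` (for `r(e) ≠ v` because `Q_{r(e)} ζ = 0`). Their closed span contains `ζ` and
is invariant under all `Q_w`, `T_e`, `T_e*`, so by irreducibility it is `H`. Thus they form a
Hilbert basis of `H` on which `Q_w` and `T_e` act exactly as `P^v_w` and `S^v_e` act on the
basis `ξ_λ` of `H_{G,v}`.
-/

theorem Submodule.apply_mem_topologicalClosure_span {ι 𝕜 M : Type*} [Semiring 𝕜]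
    [TopologicalSpace 𝕜] [AddCommMonoid M] [Module 𝕜 M] [TopologicalSpace M] [ContinuousAdd M]
    [ContinuousSMul 𝕜 M] {g : ι → M} {A : M →L[𝕜] M}
    (hA : ∀ i, A (g i) ∈ span 𝕜 (Set.range g)) {x : M}
    (hx : x ∈ (span 𝕜 (Set.range g)).topologicalClosure) :
    A x ∈ (span 𝕜 (Set.range g)).topologicalClosure := by
  have hinv : span 𝕜 (Set.range g) ∈ Module.End.invtSubmodule (A : M →ₗ[𝕜] M) := by
    rw [Module.End.mem_invtSubmodule, span_le]
    rintro _ ⟨i, rfl⟩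
    exact hA i
  exact (Module.End.mem_invtSubmodule _).mp (topologicalClosure_mem_invtSubmodule hinv) hx

theorem HilbertBasis.repr_apply_eq_of_forall_basis {ι 𝕜 E : Type*} [RCLike 𝕜]
    [NormedAddCommGroup E] [InnerProductSpace 𝕜 E] (b : HilbertBasis ι 𝕜 E) {A : E →L[𝕜] E}
    {B : lp (fun _ : ι => 𝕜) 2 →L[𝕜] lp (fun _ : ι => 𝕜) 2}
    (h : ∀ i, b.repr (A (b i)) = B (b.repr (b i))) (x : E) :
    b.repr (A x) = B (b.repr x) := by
  let R : E →L[𝕜] lp (fun _ : ι => 𝕜) 2 := b.repr.toContinuousLinearEquiv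
  have hdense : Dense (Submodule.span 𝕜 (Set.range b) : Set E) :=
    Submodule.dense_iff_topologicalClosure_eq_top.mpr b.dense_span
  have : R ∘L A = B ∘L R := ext_on hdense (by rintro _ ⟨i, rfl⟩; exact h i)
  exact congr($this x)

namespace GraphPaper

namespace IsTCK

variable {V E H : Type*} [NormedAddCommGroup H] [InnerProductSpace ℂ H] [CompleteSpace H]
  {s r : E → V} {Q : V → H →L[ℂ] H} {T : E → H →L[ℂ] H}

theorem adjoint_apply_apply (h : IsTCK s r Q T) (e : E) (x : H) :
    adjoint (T e) (T e x) = Q (s e) x :=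
  congr($(h.2.2.2.1 e) x)

theorem proj_apply_proj (h : IsTCK s r Q T) (w : V) (x : H) : Q w (Q w x) = Q w x :=
  congr($(h.2.1 w) x)

theorem proj_apply_proj_of_ne (h : IsTCK s r Q T) {w w' : V} (hw : w ≠ w') (x : H) :
    Q w (Q w' x) = 0 :=
  congr($(h.2.2.1 w w' hw) x)

theorem inner_proj_apply_self (h : IsTCK s r Q T) (w : V) (x : H) :
    ⟪Q w x, x⟫_ℂ = ⟪Q w x, Q w x⟫_ℂ := by
  rw [← adjoint_inner_left, h.1 w, h.proj_apply_proj]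

theorem norm_apply (h : IsTCK s r Q T) (e : E) (x : H) : ‖T e x‖ = ‖Q (s e) x‖ := by
  refine (pow_left_inj₀ (norm_nonneg _) (norm_nonneg _) two_ne_zero).mp ?_
  rw [apply_norm_sq_eq_inner_adjoint_left, h.2.2.2.1 e, h.inner_proj_apply_self,
    inner_self_eq_norm_sq]

theorem sum_norm_sq_adjoint_apply_le (h : IsTCK s r Q T) {w : V} {F : Finset E}
    (hF : ∀ e ∈ F, r e = w) (y : H) :
    ∑ e ∈ F, ‖adjoint (T e) y‖ ^ 2 ≤ ‖Q w y‖ ^ 2 := by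
  have hpos := (Complex.le_def.mp (h.2.2.2.2 w F hF y)).1
  have hterm (e : E) :
      ‖adjoint (T e) y‖ ^ 2 = RCLike.re ⟪(T e ∘L adjoint (T e)) y, y⟫_ℂ := by
    simpa only [adjoint_adjoint] using apply_norm_sq_eq_inner_adjoint_left (adjoint (T e)) y
  rw [sub_apply, inner_sub_left, Complex.sub_re, sum_apply, sum_inner, Complex.re_sum,
    h.inner_proj_apply_self, inner_self_eq_norm_sq_to_K] at hpos
  rw [Finset.sum_congr rfl fun e _ => hterm e]
  simpa [← Complex.ofReal_pow] using hpos

theorem adjoint_apply_eq_zero_of_proj_eq_zero (h : IsTCK s r Q T) {e : E} {y : H}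
    (hy : Q (r e) y = 0) : adjoint (T e) y = 0 := by
  have := h.sum_norm_sq_adjoint_apply_le (F := {e}) (w := r e) (by simp) y
  rw [Finset.sum_singleton, hy, norm_zero] at this
  exact norm_eq_zero.mp (by nlinarith [norm_nonneg (adjoint (T e) y)])

theorem apply_eq_zero_of_proj_eq_zero (h : IsTCK s r Q T) {e : E} {y : H}
    (hy : Q (s e) y = 0) : T e y = 0 := by
  rw [← norm_eq_zero, h.norm_apply, hy, norm_zero]

theorem proj_range_apply (h : IsTCK s r Q T) (e : E) (x : H) : Q (r e) (T e x) = T e x := by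
  -- `T_e*` vanishes on `ker Q_{r(e)}`, so `T_e* = T_e* Q_{r(e)}`; now take adjoints.
  have hTQ : adjoint (T e) ∘L Q (r e) = adjoint (T e) := by
    ext y
    refine sub_eq_zero.mp ?_
    rw [comp_apply, ← map_sub]
    exact h.adjoint_apply_eq_zero_of_proj_eq_zero (by rw [map_sub, h.proj_apply_proj, sub_self])
  have := congr($(congrArg adjoint hTQ) x)
  rwa [adjoint_comp, h.1, adjoint_adjoint, comp_apply] at this

theorem adjoint_apply_apply_of_ne (h : IsTCK s r Q T) {e f : E} (hef : e ≠ f) (x : H) :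
    adjoint (T e) (T f x) = 0 := by
  by_cases hr : r e = r f
  · -- The TCK inequality for `{e, f}` at `T_f x` reads `‖T_e* T_f x‖² + ‖T_f x‖² ≤ ‖T_f x‖²`.
    have := h.sum_norm_sq_adjoint_apply_le (F := {e, f}) (w := r f)
      (by simp [hr]) (T f x)
    rw [Finset.sum_pair hef, h.adjoint_apply_apply, h.proj_range_apply, h.norm_apply] at this
    exact norm_eq_zero.mp (by nlinarith [norm_nonneg (adjoint (T e) (T f x))])
  · refine h.adjoint_apply_eq_zero_of_proj_eq_zero ?_
    rw [← h.proj_range_apply f x, h.proj_apply_proj_of_ne hr]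

end IsTCK

namespace GPath

variable {V E : Type*} {s r : E → V}

def cons (e : E) (p : GPath s r) (h : s e = p.rng) : GPath s r where
  src := p.src
  edges := e :: p.edges
  chain := by
    have hc := p.chain
    rcases hp : p.edges with - | ⟨f, l⟩
    · exact List.isChain_singleton e
    · rw [hp] at hc
      exact List.isChain_cons_cons.mpr ⟨by simpa [rng, hp] using h, hc⟩
  src_eq := by
    have hs := p.src_eq
    rcases hp : p.edges with - | ⟨f, l⟩
    · simpa [rng, hp] using h
    · rw [hp] at hs
      simpa [List.getLast?_cons_cons] using hs

@[simp] theorem edges_cons (e : E) (p : GPath s r) (h : s e = p.rng) :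
    (p.cons e h).edges = e :: p.edges :=
  rfl

@[simp] theorem tail_cons (e : E) (p : GPath s r) (h : s e = p.rng) : (p.cons e h).tail = p :=
  ext' rfl rfl

theorem edges_eq_cons_tail {p : GPath s r} {e : E} (he : p.edges.head? = some e) :
    p.edges = e :: p.tail.edges := by
  obtain ⟨t, ht⟩ := List.head?_eq_some_iff.mp he
  simp [tail, ht]

theorem src_eq_rng_tail {p : GPath s r} {e : E} (he : p.edges.head? = some e) :
    s e = p.tail.rng := by
  have hc := p.chain
  have hs := p.src_eq
  have hpe := edges_eq_cons_tail he
  rcases ht : p.tail.edges with - | ⟨f, l⟩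
  · rw [hpe, ht] at hs
    simp only [rng, ht, List.head?_nil, Option.map_none, Option.getD_none]
    exact hs e (by simp)
  · rw [hpe, ht] at hc
    simpa [rng, ht] using (List.isChain_cons_cons.mp hc).1

end GPath

theorem list_prod_map_cons_apply {ι R M : Type*} [Semiring R] [TopologicalSpace M]
    [AddCommMonoid M] [Module R M] (T : ι → M →L[R] M) (e : ι) (l : List ι) (x : M) :
    ((e :: l).map T).prod x = T e ((l.map T).prod x) :=
  rfl

section PathVectors

variable {V E H : Type*} [NormedAddCommGroup H] [InnerProductSpace ℂ H] [CompleteSpace H]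
  {s r : E → V} {Q : V → H →L[ℂ] H} {T : E → H →L[ℂ] H} {v : V} {ζ : H}

theorem IsTCK.adjoint_apply_eq_zero_of_mem_wandering (hQT : IsTCK s r Q T)
    (hζ : ζ ∈ wandering s r Q T v) (e : E) : adjoint (T e) ζ = 0 := by
  by_cases hre : r e = v
  · exact hζ.2 e hre
  · refine hQT.adjoint_apply_eq_zero_of_proj_eq_zero ?_
    rw [← hζ.1, hQT.proj_apply_proj_of_ne hre]

theorem IsTCK.proj_list_prod_apply (hQT : IsTCK s r Q T) (hζ : ζ ∈ wandering s r Q T v)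
    (l : List E) (w : V) :
    Q w ((l.map T).prod ζ) = if (l.head?.map r).getD v = w then (l.map T).prod ζ else 0 := by
  have hrng : Q ((l.head?.map r).getD v) ((l.map T).prod ζ) = (l.map T).prod ζ := by
    cases l with
    | nil => exact hζ.1
    | cons e l => exact hQT.proj_range_apply e _
  split_ifs with hw
  · rwa [← hw]
  · rw [← hrng, hQT.proj_apply_proj_of_ne (Ne.symm hw)]

theorem IsTCK.inner_list_prod_apply_eq_zero (hQT : IsTCK s r Q T)
    (hζ : ζ ∈ wandering s r Q T v) {l l' : List E} (hl : l ≠ l') :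
    ⟪(l.map T).prod ζ, (l'.map T).prod ζ⟫_ℂ = 0 := by
  induction l generalizing l' with
  | nil =>
    obtain ⟨f, l', rfl⟩ := List.exists_cons_of_ne_nil hl.symm
    rw [list_prod_map_cons_apply, ← adjoint_inner_left, List.map_nil, List.prod_nil,
      one_apply_eq_self, hQT.adjoint_apply_eq_zero_of_mem_wandering hζ, inner_zero_left]
  | cons e l ih =>
    cases l' with
    | nil =>
      rw [list_prod_map_cons_apply, ← adjoint_inner_right, List.map_nil, List.prod_nil,
        one_apply_eq_self, hQT.adjoint_apply_eq_zero_of_mem_wandering hζ, inner_zero_right]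
    | cons f l' =>
      rw [list_prod_map_cons_apply, list_prod_map_cons_apply, ← adjoint_inner_right]
      obtain rfl | hef := eq_or_ne e f
      · rw [hQT.adjoint_apply_apply, hQT.proj_list_prod_apply hζ]
        split_ifs
        · exact ih fun h => hl (h ▸ rfl)
        · exact inner_zero_right _
      · rw [hQT.adjoint_apply_apply_of_ne hef, inner_zero_right]

def pathVec (T : E → H →L[ℂ] H) (ζ : H) (p : GPath s r) : H := (p.edges.map T).prod ζ

theorem IsTCK.proj_pathVec (hQT : IsTCK s r Q T) (hζ : ζ ∈ wandering s r Q T v)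
    {p : GPath s r} (hp : p.src = v) (w : V) :
    Q w (pathVec T ζ p) = if p.rng = w then pathVec T ζ p else 0 := by
  subst hp
  exact hQT.proj_list_prod_apply hζ p.edges w

theorem IsTCK.apply_pathVec (hQT : IsTCK s r Q T) (hζ : ζ ∈ wandering s r Q T v)
    {p : GPath s r} (hp : p.src = v) (e : E) :
    T e (pathVec T ζ p) = if h : s e = p.rng then pathVec T ζ (p.cons e h) else 0 := by
  split_ifs with h
  · rfl
  · exact hQT.apply_eq_zero_of_proj_eq_zero (by rw [hQT.proj_pathVec hζ hp, if_neg (Ne.symm h)])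

theorem IsTCK.adjoint_apply_pathVec (hQT : IsTCK s r Q T) (hζ : ζ ∈ wandering s r Q T v)
    {p : GPath s r} (hp : p.src = v) (e : E) :
    adjoint (T e) (pathVec T ζ p) = if p.edges.head? = some e then pathVec T ζ p.tail else 0 := by
  split_ifs with he
  · rw [pathVec, GPath.edges_eq_cons_tail he, list_prod_map_cons_apply, hQT.adjoint_apply_apply,
      ← pathVec, hQT.proj_pathVec hζ (p := p.tail) hp,
      if_pos (GPath.src_eq_rng_tail he).symm]
  · rcases hl : p.edges with - | ⟨f, l⟩
    · simp [pathVec, hl, one_apply_eq_self, hQT.adjoint_apply_eq_zero_of_mem_wandering hζ]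
    · have hef : e ≠ f := by rintro rfl; simp [hl] at he
      rw [pathVec, hl, list_prod_map_cons_apply, hQT.adjoint_apply_apply_of_ne hef]

theorem IsTCK.norm_pathVec (hQT : IsTCK s r Q T) (hζ : ζ ∈ wandering s r Q T v)
    {p : GPath s r} (hp : p.src = v) : ‖pathVec T ζ p‖ = ‖ζ‖ := by
  suffices ∀ (l : List E) (p : GPath s r), p.src = v → p.edges = l →
      ‖pathVec T ζ p‖ = ‖ζ‖ from this _ p hp rfl
  intro l
  induction l with
  | nil => intro p _ hl; simp [pathVec, hl, one_apply_eq_self]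
  | cons e l ih =>
    intro p hp hl
    have he : p.edges.head? = some e := by simp [hl]
    rw [pathVec, GPath.edges_eq_cons_tail he, list_prod_map_cons_apply, hQT.norm_apply,
      ← pathVec, hQT.proj_pathVec hζ (p := p.tail) hp,
      if_pos (GPath.src_eq_rng_tail he).symm]
    exact ih p.tail hp (by simp [GPath.tail, hl])

theorem IsTCK.orthonormal_pathVec (hQT : IsTCK s r Q T) (hζ : ζ ∈ wandering s r Q T v)
    (hζ1 : ‖ζ‖ = 1) : Orthonormal ℂ fun p : SPath s r v => pathVec T ζ p.1 :=
  ⟨fun p => (hQT.norm_pathVec hζ p.2).trans hζ1, fun p q hpq =>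
    hQT.inner_list_prod_apply_eq_zero hζ fun h =>
      hpq (Subtype.ext (GPath.ext' (p.2.trans q.2.symm) h))⟩

theorem IsTCK.topologicalClosure_span_pathVec_eq_top (hQT : IsTCK s r Q T)
    (hirr : ∀ M : Submodule ℂ H, IsClosed (M : Set H) → Reduces Q T M → M = ⊥ ∨ M = ⊤)
    (hζ : ζ ∈ wandering s r Q T v) (hζ0 : ζ ≠ 0) :
    (Submodule.span ℂ (Set.range fun p : SPath s r v => pathVec T ζ p.1)).topologicalClosure
      = ⊤ := by
  set S := Submodule.span ℂ (Set.range fun p : SPath s r v => pathVec T ζ p.1)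
  have hmem (p : SPath s r v) : pathVec T ζ p.1 ∈ S := Submodule.subset_span ⟨p, rfl⟩
  have hQ (w : V) (p : SPath s r v) : Q w (pathVec T ζ p.1) ∈ S := by
    rw [hQT.proj_pathVec hζ p.2]
    split_ifs
    exacts [hmem p, S.zero_mem]
  have hT (e : E) (p : SPath s r v) : T e (pathVec T ζ p.1) ∈ S := by
    rw [hQT.apply_pathVec hζ p.2]
    split_ifs with h
    exacts [hmem ⟨p.1.cons e h, p.2⟩, S.zero_mem]
  have hT' (e : E) (p : SPath s r v) : adjoint (T e) (pathVec T ζ p.1) ∈ S := by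
    rw [hQT.adjoint_apply_pathVec hζ p.2]
    split_ifs
    exacts [hmem ⟨p.1.tail, p.2⟩, S.zero_mem]
  have hred : Reduces Q T S.topologicalClosure := by
    refine ⟨fun w x hx => ?_, fun e x hx => ?_⟩
    · rw [hQT.1 w]
      exact ⟨Submodule.apply_mem_topologicalClosure_span (hQ w) hx,
        Submodule.apply_mem_topologicalClosure_span (hQ w) hx⟩
    · exact ⟨Submodule.apply_mem_topologicalClosure_span (hT e) hx,
        Submodule.apply_mem_topologicalClosure_span (hT' e) hx⟩
  refine (hirr _ S.isClosed_topologicalClosure hred).resolve_left fun hbot => hζ0 ?_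
  have : pathVec T ζ (GPath.nil s r v) ∈ S.topologicalClosure :=
    S.le_topologicalClosure (hmem ⟨GPath.nil s r v, rfl⟩)
  rwa [hbot, Submodule.mem_bot] at this

end PathVectors

section Model

theorem pullCLM_apply_apply {ι κ : Type*} {f : κ → Option ι}
    (hf : ∀ ⦃k k' : κ⦄ ⦃i : ι⦄, f k = some i → f k' = some i → k = k')
    (x : lp (fun _ : ι => ℂ) 2) (k : κ) : pullCLM f hf x k = ((f k).map x).getD 0 :=
  rfl

theorem pullCLM_single_of_eq {ι κ : Type*} [DecidableEq ι] [DecidableEq κ]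
    {f : κ → Option ι}
    (hf : ∀ ⦃k k' : κ⦄ ⦃i : ι⦄, f k = some i → f k' = some i → k = k')
    {i : ι} {k : κ} (hk : f k = some i) (c : ℂ) :
    pullCLM f hf (lp.single 2 i c) = lp.single 2 k c := by
  refine lp.ext (funext fun k' => ?_)
  rw [pullCLM_apply_apply]
  rcases hk' : f k' with - | j
  · have : k' ≠ k := by rintro rfl; simp_all
    simp [this]
  · obtain rfl | hj := eq_or_ne j i
    · simp [hf hk' hk]
    · have : k' ≠ k := by rintro rfl; simp_all
      simp [lp.single_apply, hj, this]

theorem pullCLM_single_of_forall_ne {ι κ : Type*} [DecidableEq ι] {f : κ → Option ι}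
    (hf : ∀ ⦃k k' : κ⦄ ⦃i : ι⦄, f k = some i → f k' = some i → k = k')
    {i : ι} (h : ∀ k, f k ≠ some i) (c : ℂ) :
    pullCLM f hf (lp.single 2 i c) = 0 := by
  refine lp.ext (funext fun k => ?_)
  rw [pullCLM_apply_apply]
  rcases hk : f k with - | j
  · simp
  · have : j ≠ i := by rintro rfl; exact h k hk
    simp [lp.single_apply, this]

variable {V E : Type*} {s r : E → V} {v : V}

theorem modelP_xi (p : SPath s r v) (w : V) :
    modelP s r v w (xi p) = if p.1.rng = w then xi p else 0 := by
  unfold modelP xi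
  split_ifs with h
  · exact pullCLM_single_of_eq _ (by simp [decodeP, h]) 1
  · refine pullCLM_single_of_forall_ne _ (fun k hk => h ?_) 1
    unfold decodeP at hk
    split_ifs at hk with hkw
    rwa [← Option.some.inj hk]

theorem modelS_xi (p : SPath s r v) (e : E) :
    modelS s r v e (xi p) = if h : s e = p.1.rng then xi ⟨p.1.cons e h, p.2⟩ else 0 := by
  unfold modelS xi
  split_ifs with h
  · exact pullCLM_single_of_eq _ (by simp [decodeS]) 1
  · refine pullCLM_single_of_forall_ne _ (fun k hk => h ?_) 1
    unfold decodeS at hk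
    split_ifs at hk with he
    rw [← Option.some.inj hk]
    exact GPath.src_eq_rng_tail he

end Model

theorem statement_10_general {V E : Type*}
    {H : Type*} [NormedAddCommGroup H] [InnerProductSpace ℂ H] [CompleteSpace H]
    (s r : E → V) (Q : V → H →L[ℂ] H) (T : E → H →L[ℂ] H) (hQT : IsTCK s r Q T)
    (hirr : ∀ M : Submodule ℂ H, IsClosed (M : Set H) → Reduces Q T M → M = ⊥ ∨ M = ⊤)
    (v : V) (ζ : H) (hζ : ζ ≠ 0)
    (hζ1 : Q v ζ = ζ) (hζ2 : ∀ e : E, r e = v → ContinuousLinearMap.adjoint (T e) ζ = 0) :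
    ∃ U : H ≃ₗᵢ[ℂ] HGv s r v,
      (∀ (w : V) (x : H), U (Q w x) = modelP s r v w (U x)) ∧
      (∀ (e : E) (x : H), U (T e x) = modelS s r v e (U x)) := by
  set ζ₀ : H := (‖ζ‖⁻¹ : ℂ) • ζ
  have hζ₀ : ζ₀ ∈ wandering s r Q T v := Submodule.smul_mem _ _ ⟨hζ1, hζ2⟩
  have hnorm : ‖ζ₀‖ = 1 := norm_smul_inv_norm hζ
  have hon := hQT.orthonormal_pathVec hζ₀ hnorm
  have hspan := hQT.topologicalClosure_span_pathVec_eq_top hirr hζ₀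
    (norm_ne_zero_iff.mp (hnorm ▸ one_ne_zero))
  let b := HilbertBasis.mk hon hspan.ge
  have hb (p : SPath s r v) : b p = pathVec T ζ₀ p.1 := congrFun (HilbertBasis.coe_mk hon _) p
  have hrepr (p : SPath s r v) : b.repr (pathVec T ζ₀ p.1) = xi p := by
    rw [← hb]
    exact b.repr_self p
  refine ⟨b.repr, fun w => b.repr_apply_eq_of_forall_basis fun p => ?_,
    fun e => b.repr_apply_eq_of_forall_basis fun p => ?_⟩
  · rw [hb, hQT.proj_pathVec hζ₀ p.2, hrepr, modelP_xi]
    split_ifs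
    exacts [hrepr p, map_zero _]
  · rw [hb, hQT.apply_pathVec hζ₀ p.2, hrepr, modelS_xi]
    split_ifs with h
    exacts [hrepr ⟨p.1.cons e h, p.2⟩, map_zero _]

/-- An irreducible TCK family on a nonzero Hilbert space admitting a
nonzero wandering vector at a vertex `v` with `r⁻¹(v) ≠ ∅` is unitarily equivalent to
the model TCK family `(P^v, S^v)` on `H_{G,v}`. -/
theorem statement_10 {V E : Type*} [Countable V] [Countable E]
    {H : Type*} [NormedAddCommGroup H] [InnerProductSpace ℂ H] [CompleteSpace H]
    [Nontrivial H]
    (s r : E → V) (Q : V → H →L[ℂ] H) (T : E → H →L[ℂ] H) (hQT : IsTCK s r Q T)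
    (hirr : ∀ M : Submodule ℂ H, IsClosed (M : Set H) → Reduces Q T M → M = ⊥ ∨ M = ⊤)
    (v : V) (hv : ∃ e, r e = v) (ζ : H) (hζ : ζ ≠ 0)
    (hζ1 : Q v ζ = ζ) (hζ2 : ∀ e : E, r e = v → ContinuousLinearMap.adjoint (T e) ζ = 0) :
    ∃ U : H ≃ₗᵢ[ℂ] HGv s r v,
      (∀ (w : V) (x : H), U (Q w x) = modelP s r v w (U x)) ∧
      (∀ (e : E) (x : H), U (T e x) = modelS s r v e (U x)) :=
  statement_10_general s r Q T hQT hirr v ζ hζ hζ1 hζ2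

end GraphPaper
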